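/- Let E be a skew left brace of abelian type with an ideal I = I₁ × ⋯ × I_r, each I_j an ideal of E, and r ≥ 2. Then E splits over I if and only if for some (equivalently any) pair k ≠ m, the quotient E/I_k splits over I/I_k and E/I_m splits over I/I_m. -/

import Mathlib

/-- A skew left brace: a set with two group structures `(A, +)` and `(A, ∘)`
(here `∘` is `circ`, with inverse `sinv`) satisfying
`a ∘ (b + c) = (a ∘ b) - a + (a ∘ c)`. -/
class SkewBrace (A : Type*) extends AddGroup A where
  circ : A → A → A
  circ_assoc : ∀ a b c : A, circ (circ a b) c = circ a (circ b c)
  zero_circ : ∀ a : A, circ 0 a = a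
  circ_zero : ∀ a : A, circ a 0 = a
  sinv : A → A
  circ_sinv : ∀ a : A, circ a (sinv a) = 0
  sinv_circ : ∀ a : A, circ (sinv a) a = 0
  compat : ∀ a b c : A, circ a (b + c) = circ a b + -a + circ a c

namespace SkewBrace

variable {A : Type*} [SkewBrace A]

/-- The lambda map `λ_a(b) = -a + (a ∘ b)`. -/
def lam (a b : A) : A := -a + circ a b

/-- `S` is (the carrier of) a sub-skew brace: a subgroup of both `(A,+)` and `(A,∘)`. -/
def IsSub (S : Set A) : Prop :=
  (0 : A) ∈ S ∧ (∀ a ∈ S, ∀ b ∈ S, a + b ∈ S) ∧ (∀ a ∈ S, -a ∈ S) ∧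
    (∀ a ∈ S, ∀ b ∈ S, circ a b ∈ S) ∧ (∀ a ∈ S, sinv a ∈ S)

/-- `S` is (the carrier of) an ideal: a sub-skew brace normal in both group
structures and invariant under all `λ_a`. -/
def IsIdeal (S : Set A) : Prop :=
  IsSub S ∧ (∀ a : A, ∀ x ∈ S, -a + x + a ∈ S) ∧
    (∀ a : A, ∀ x ∈ S, circ (sinv a) (circ x a) ∈ S) ∧
    (∀ a : A, ∀ x ∈ S, lam a x ∈ S)

/-- A skew brace homomorphism: preserves both operations. -/
def IsHom {B : Type*} [SkewBrace B] (f : A → B) : Prop :=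
  (∀ x y : A, f (x + y) = f x + f y) ∧ ∀ x y : A, f (circ x y) = circ (f x) (f y)

/-- Multiplication of the semidirect product group `Λ_A = (A,+) ⋊_λ (A,∘)`. -/
def lmul (p q : A × A) : A × A := (p.1 + lam p.2 q.1, circ p.2 q.2)

end SkewBrace

open SkewBrace
/-- `E/J` splits over `I/J` (for ideals `J ⊆ I` of `E`), expressed inside `E`. -/
def SkewBrace.RelSplit {E : Type*} [SkewBrace E] (I J : Set E) : Prop :=
  ∃ G : Set E, IsSub G ∧ J ⊆ G ∧ (∀ e : E, ∃ g ∈ G, ∃ x ∈ I, e = g + x) ∧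
    G ∩ I ⊆ J

/-!
Splitting over `I` passes to the quotients: if `G` complements `I`, then `G + J` complements `I`
modulo `J`. Conversely, let `G₁` complement `I` modulo `I_k` and `G₂` complement `I` modulo
`I_m`, and let `B = ∑_{j ≠ k} I_j`; in a brace of abelian type `B` is an ideal, `I = B ⊕ I_k` and
`I_m ⊆ B`. Then `G₁ ∩ (G₂ + B)` complements `I`: it meets `I` inside `I_k ∩ B = 0`.
-/

open Pointwise

class SkewBrace.IsAbelianType (E : Type*) [SkewBrace E] : Prop where
  add_comm : ∀ a b : E, a + b = b + a

namespace SkewBrace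

instance {E : Type*} [SkewBrace E] [IsAbelianType E] : AddCommGroup E :=
  { (inferInstance : AddGroup E) with add_comm := IsAbelianType.add_comm }

variable {E : Type*} [SkewBrace E]

namespace IsSub

variable {S : Set E}

theorem zero_mem (hS : IsSub S) : (0 : E) ∈ S := hS.1

theorem add_mem (hS : IsSub S) {a b : E} (ha : a ∈ S) (hb : b ∈ S) : a + b ∈ S :=
  hS.2.1 a ha b hb

theorem neg_mem (hS : IsSub S) {a : E} (ha : a ∈ S) : -a ∈ S := hS.2.2.1 a ha

theorem circ_mem (hS : IsSub S) {a b : E} (ha : a ∈ S) (hb : b ∈ S) : circ a b ∈ S :=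
  hS.2.2.2.1 a ha b hb

theorem sinv_mem (hS : IsSub S) {a : E} (ha : a ∈ S) : sinv a ∈ S := hS.2.2.2.2 a ha

theorem add_mem_cancel_right (hS : IsSub S) {a b : E} (hb : b ∈ S) : a + b ∈ S ↔ a ∈ S :=
  ⟨fun h => by simpa using hS.add_mem h (hS.neg_mem hb), fun ha => hS.add_mem ha hb⟩

theorem inter {T : Set E} (hS : IsSub S) (hT : IsSub T) : IsSub (S ∩ T) :=
  ⟨⟨hS.zero_mem, hT.zero_mem⟩, fun _ ha _ hb => ⟨hS.add_mem ha.1 hb.1, hT.add_mem ha.2 hb.2⟩,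
    fun _ ha => ⟨hS.neg_mem ha.1, hT.neg_mem ha.2⟩,
    fun _ ha _ hb => ⟨hS.circ_mem ha.1 hb.1, hT.circ_mem ha.2 hb.2⟩,
    fun _ ha => ⟨hS.sinv_mem ha.1, hT.sinv_mem ha.2⟩⟩

end IsSub

namespace IsIdeal

variable {J : Set E}

theorem isSub (hJ : IsIdeal J) : IsSub J := hJ.1

theorem neg_add_add_mem (hJ : IsIdeal J) (a : E) {x : E} (hx : x ∈ J) : -a + x + a ∈ J :=
  hJ.2.1 a x hx

theorem sinv_circ_circ_mem (hJ : IsIdeal J) (a : E) {x : E} (hx : x ∈ J) :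
    circ (sinv a) (circ x a) ∈ J :=
  hJ.2.2.1 a x hx

theorem lam_mem (hJ : IsIdeal J) (a : E) {x : E} (hx : x ∈ J) : lam a x ∈ J := hJ.2.2.2 a x hx

end IsIdeal

theorem circ_eq_add_lam (a b : E) : circ a b = a + lam a b := by simp [lam]

theorem lam_zero (a : E) : lam a 0 = 0 := by simp [lam, circ_zero]

theorem zero_lam (a : E) : lam 0 a = a := by simp [lam, zero_circ]

theorem lam_add (a b c : E) : lam a (b + c) = lam a b + lam a c := by
  simp [lam, compat, add_assoc]

theorem lam_neg (a b : E) : lam a (-b) = -lam a b := by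
  rw [eq_neg_iff_add_eq_zero, ← lam_add, neg_add_cancel, lam_zero]

theorem circ_neg (a b : E) : circ a (-b) = a - circ a b + a := by
  have h := compat a b (-b)
  rw [add_neg_cancel, circ_zero] at h
  rw [eq_neg_add_of_add_eq h.symm, neg_add_rev, neg_neg, sub_eq_add_neg]

theorem lam_circ (a b c : E) : lam (circ a b) c = lam a (lam b c) := by
  simp only [lam, compat, circ_neg, circ_assoc, sub_eq_add_neg, add_assoc, neg_add_cancel_left,
    add_neg_cancel_left]

theorem eq_sinv_of_circ_eq_zero {x y : E} (h : circ y x = 0) : y = sinv x := by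
  simpa [circ_assoc, circ_sinv, circ_zero, zero_circ] using congrArg (circ · (sinv x)) h

theorem circ_sinv_circ (a b : E) : circ a (circ (sinv a) b) = b := by
  rw [← circ_assoc, circ_sinv, zero_circ]

theorem sinv_circ_rev (a b : E) : sinv (circ a b) = circ (sinv b) (sinv a) := by
  refine (eq_sinv_of_circ_eq_zero ?_).symm
  rw [circ_assoc, ← circ_assoc (sinv a), sinv_circ, zero_circ, sinv_circ]

theorem sinv_eq_neg_lam (a : E) : sinv a = -lam (sinv a) a :=
  eq_neg_of_add_eq_zero_left (by rw [← circ_eq_add_lam, sinv_circ])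

theorem lam_lam_sinv (a b : E) : lam a (lam (sinv a) b) = b := by
  rw [← lam_circ, circ_sinv, zero_lam]

theorem add_eq_circ_lam (a x : E) : a + x = circ a (lam (sinv a) x) := by
  rw [circ_eq_add_lam, lam_lam_sinv]

theorem IsIdeal.lam_sub_mem {J : Set E} (hJ : IsIdeal J) {x : E} (hx : x ∈ J) (a : E) :
    lam x a - a ∈ J := by
  have hw : lam a (circ (sinv a) (circ x a)) ∈ J := hJ.lam_mem a (hJ.sinv_circ_circ_mem a hx)
  have hxa : circ x a = a + lam a (circ (sinv a) (circ x a)) := by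
    rw [← circ_eq_add_lam, circ_sinv_circ]
  have h : lam x a - a = -x + (-(-a) + lam a (circ (sinv a) (circ x a)) + -a) := by
    rw [lam, neg_neg, ← hxa, sub_eq_add_neg, add_assoc]
  rw [h]
  exact hJ.isSub.add_mem (hJ.isSub.neg_mem hx) (hJ.neg_add_add_mem (-a) hw)

theorem circ_mem_add {G J : Set E} (hJ : IsIdeal J) {g u : E} (hg : g ∈ G) (hu : u ∈ J) :
    circ g u ∈ G + J :=
  ⟨g, hg, lam g u, hJ.lam_mem g hu, (circ_eq_add_lam g u).symm⟩

theorem IsSub.add_isIdeal {G J : Set E} (hG : IsSub G) (hJ : IsIdeal J) : IsSub (G + J) := by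
  refine ⟨⟨0, hG.zero_mem, 0, hJ.isSub.zero_mem, add_zero 0⟩, ?_, ?_, ?_, ?_⟩
  · rintro - ⟨g, hg, x, hx, rfl⟩ - ⟨g', hg', x', hx', rfl⟩
    refine ⟨g + g', hG.add_mem hg hg', -g' + x + g' + x',
      hJ.isSub.add_mem (hJ.neg_add_add_mem g' hx) hx', ?_⟩
    simp [add_assoc]
  · rintro - ⟨g, hg, x, hx, rfl⟩
    refine ⟨-g, hG.neg_mem hg, -(-g) + -x + -g, hJ.neg_add_add_mem (-g) (hJ.isSub.neg_mem hx), ?_⟩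
    simp [add_assoc]
  · rintro - ⟨g, hg, x, hx, rfl⟩ - ⟨g', hg', x', hx', rfl⟩
    have hv := hJ.sinv_circ_circ_mem g' (hJ.lam_mem (sinv g) hx)
    have h : circ (g + x) (g' + x') = circ (circ g g')
        (circ (circ (sinv g') (circ (lam (sinv g) x) g')) (lam (sinv g') x')) := by
      simp only [add_eq_circ_lam g, add_eq_circ_lam g', circ_assoc, circ_sinv_circ]
    rw [h]
    exact circ_mem_add hJ (hG.circ_mem hg hg') (hJ.isSub.circ_mem hv (hJ.lam_mem _ hx'))
  · rintro - ⟨g, hg, x, hx, rfl⟩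
    have hv := hJ.sinv_circ_circ_mem (sinv g) (hJ.isSub.sinv_mem (hJ.lam_mem (sinv g) hx))
    have h : sinv (g + x) = circ (sinv g)
        (circ (sinv (sinv g)) (circ (sinv (lam (sinv g) x)) (sinv g))) := by
      rw [add_eq_circ_lam g, sinv_circ_rev, circ_sinv_circ]
    rw [h]
    exact circ_mem_add hJ (hG.sinv_mem hg) hv

theorem relSplit_of_relSplit_zero {I J : Set E} (hI : IsSub I) (hJ : IsIdeal J) (hJI : J ⊆ I)
    (h : RelSplit I {0}) : RelSplit I J := by
  obtain ⟨G, hG, -, hGI, hGI0⟩ := h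
  refine ⟨G + J, hG.add_isIdeal hJ, fun x hx => ⟨0, hG.zero_mem, x, hx, zero_add x⟩, ?_, ?_⟩
  · intro e
    obtain ⟨g, hg, x, hx, rfl⟩ := hGI e
    exact ⟨g, ⟨g, hg, 0, hJ.isSub.zero_mem, add_zero g⟩, x, hx, rfl⟩
  · rintro - ⟨⟨g, hg, y, hy, rfl⟩, hgy⟩
    have hg0 : g = 0 := hGI0 ⟨hg, (hI.add_mem_cancel_right (hJI hy)).mp hgy⟩
    simpa [hg0] using hy

theorem relSplit_zero_of_relSplit {I K M B : Set E} (hI : IsSub I) (hB : IsIdeal B)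
    (hKI : K ⊆ I) (hBI : B ⊆ I) (hMB : M ⊆ B) (hIBK : I ⊆ B + K) (hKB : K ∩ B ⊆ {0})
    (hK : RelSplit I K) (hM : RelSplit I M) : RelSplit I {0} := by
  obtain ⟨G₁, hG₁, hKG₁, hG₁I, hG₁IK⟩ := hK
  obtain ⟨G₂, hG₂, -, hG₂I, hG₂IM⟩ := hM
  refine ⟨G₁ ∩ (G₂ + B), hG₁.inter (hG₂.add_isIdeal hB),
    Set.singleton_subset_iff.mpr (hG₁.inter (hG₂.add_isIdeal hB)).zero_mem, ?_, ?_⟩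
  · intro e
    obtain ⟨g₁, hg₁, x, hx, rfl⟩ := hG₁I e
    obtain ⟨g₂, hg₂, y, hy, rfl⟩ := hG₂I g₁
    obtain ⟨b, hb, a, ha, rfl⟩ := hIBK hy
    have hG₁ba : g₂ + b ∈ G₁ := by
      simpa [add_assoc] using hG₁.add_mem hg₁ (hG₁.neg_mem (hKG₁ ha))
    exact ⟨g₂ + b, ⟨hG₁ba, g₂, hg₂, b, hb, rfl⟩, a + x, hI.add_mem (hKI ha) hx,
      by simp only [add_assoc]⟩
  · rintro - ⟨⟨hG₁e, g₂, hg₂, b, hb, rfl⟩, heI⟩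
    have hg₂M : g₂ ∈ M := hG₂IM ⟨hg₂, (hI.add_mem_cancel_right (hBI hb)).mp heI⟩
    exact hKB ⟨hG₁IK ⟨hG₁e, heI⟩, hB.isSub.add_mem (hMB hg₂M) hb⟩

section AbelianType

variable [IsAbelianType E]

theorem sinv_circ_circ_eq (a x : E) :
    circ (sinv a) (circ x a) = lam (sinv a) x + lam (sinv a) (lam x a - a) := by
  rw [circ_eq_add_lam x a, circ_eq_add_lam (sinv a), lam_add, sub_eq_add_neg, lam_add, lam_neg]
  nth_rewrite 1 [sinv_eq_neg_lam a]
  abel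

theorem isIdeal_of_lam_sub_mem {S : Set E} (h0 : (0 : E) ∈ S)
    (hadd : ∀ a ∈ S, ∀ b ∈ S, a + b ∈ S) (hneg : ∀ a ∈ S, -a ∈ S)
    (hlam : ∀ a : E, ∀ x ∈ S, lam a x ∈ S) (hsub : ∀ x ∈ S, ∀ a : E, lam x a - a ∈ S) :
    IsIdeal S := by
  refine ⟨⟨h0, hadd, hneg, fun a ha b hb => ?_, fun a ha => ?_⟩, fun a x hx => ?_,
    fun a x hx => ?_, hlam⟩
  · rw [circ_eq_add_lam]
    exact hadd _ ha _ (hlam a b hb)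
  · rw [sinv_eq_neg_lam]
    exact hneg _ (hlam _ _ ha)
  · rwa [neg_add_cancel_comm]
  · rw [sinv_circ_circ_eq]
    exact hadd _ (hlam _ _ hx) _ (hlam _ _ (hsub x hx a))

def sumExcept {ι : Type*} [Fintype ι] (J : ι → Set E) (k : ι) : Set E :=
  {x | ∃ f : ι → E, (∀ j, f j ∈ J j) ∧ f k = 0 ∧ ∑ j, f j = x}

variable {ι : Type*} [Fintype ι] {J : ι → Set E} {k : ι}

theorem zero_mem_sumExcept (hJ : ∀ j, IsIdeal (J j)) : (0 : E) ∈ sumExcept J k :=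
  ⟨0, fun j => (hJ j).isSub.zero_mem, rfl, Finset.sum_const_zero⟩

theorem add_mem_sumExcept (hJ : ∀ j, IsIdeal (J j)) {x y : E} (hx : x ∈ sumExcept J k)
    (hy : y ∈ sumExcept J k) : x + y ∈ sumExcept J k := by
  obtain ⟨f, hf, hfk, rfl⟩ := hx
  obtain ⟨g, hg, hgk, rfl⟩ := hy
  exact ⟨f + g, fun j => (hJ j).isSub.add_mem (hf j) (hg j), by simp [hfk, hgk],
    Finset.sum_add_distrib⟩

theorem neg_mem_sumExcept (hJ : ∀ j, IsIdeal (J j)) {x : E} (hx : x ∈ sumExcept J k) :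
    -x ∈ sumExcept J k := by
  obtain ⟨f, hf, hfk, rfl⟩ := hx
  exact ⟨-f, fun j => (hJ j).isSub.neg_mem (hf j), by simp [hfk], by simp⟩

theorem lam_mem_sumExcept (hJ : ∀ j, IsIdeal (J j)) (a : E) {x : E} (hx : x ∈ sumExcept J k) :
    lam a x ∈ sumExcept J k := by
  obtain ⟨f, hf, hfk, rfl⟩ := hx
  exact ⟨fun j => lam a (f j), fun j => (hJ j).lam_mem a (hf j), by simp [hfk, lam_zero],
    (map_sum (AddMonoidHom.mk' (lam a) (lam_add a)) f Finset.univ).symm⟩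

theorem sumExcept_subset {I : Set E} (hI : IsSub I) (hJI : ∀ j, J j ⊆ I) :
    sumExcept J k ⊆ I := by
  rintro - ⟨f, hf, -, rfl⟩
  exact Finset.sum_induction f (· ∈ I) (fun _ _ => hI.add_mem) hI.zero_mem
    fun j _ => hJI j (hf j)

variable [DecidableEq ι]

theorem mem_sumExcept_of_mem (hJ : ∀ j, IsIdeal (J j)) {j : ι} (hjk : j ≠ k) {y : E}
    (hy : y ∈ J j) : y ∈ sumExcept J k := by
  refine ⟨Pi.single j y, fun i => ?_, Pi.single_eq_of_ne' hjk _, Fintype.sum_pi_single' j y⟩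
  rcases eq_or_ne i j with rfl | hij
  · simpa using hy
  · simpa [Pi.single_eq_of_ne hij] using (hJ i).isSub.zero_mem

theorem lam_sum_sub_mem_sumExcept (hJ : ∀ j, IsIdeal (J j)) {f : ι → E} (hf : ∀ j, f j ∈ J j)
    {s : Finset ι} (hks : k ∉ s) (a : E) : lam (∑ j ∈ s, f j) a - a ∈ sumExcept J k := by
  induction s using Finset.induction_on generalizing a with
  | empty => simpa [zero_lam] using zero_mem_sumExcept hJ
  | insert i s his ih =>
    rw [Finset.mem_insert, not_or] at hks
    set t := ∑ j ∈ s, f j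
    have hy : lam (sinv t) (f i) ∈ J i := (hJ i).lam_mem _ (hf i)
    -- `f i + t = t ∘ y` with `y ∈ J i`, and `λ` turns `∘` into composition
    have h : lam (∑ j ∈ insert i s, f j) a - a =
        (lam t (lam (lam (sinv t) (f i)) a) - lam (lam (sinv t) (f i)) a) +
          (lam (lam (sinv t) (f i)) a - a) := by
      rw [Finset.sum_insert his, add_comm, add_eq_circ_lam, lam_circ]
      abel
    rw [h]
    exact add_mem_sumExcept hJ (ih hks.2 _)
      (mem_sumExcept_of_mem hJ (Ne.symm hks.1) ((hJ i).lam_sub_mem hy a))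

theorem isIdeal_sumExcept (hJ : ∀ j, IsIdeal (J j)) (k : ι) : IsIdeal (sumExcept J k) := by
  refine isIdeal_of_lam_sub_mem (zero_mem_sumExcept hJ)
    (fun _ ha _ hb => add_mem_sumExcept hJ ha hb) (fun _ ha => neg_mem_sumExcept hJ ha)
    (fun a _ hx => lam_mem_sumExcept hJ a hx) ?_
  rintro - ⟨f, hf, hfk, rfl⟩ a
  rw [← Finset.sum_erase Finset.univ hfk]
  exact lam_sum_sub_mem_sumExcept hJ hf (Finset.notMem_erase k _) a

theorem subset_sumExcept_add (hJ : ∀ j, IsIdeal (J j)) {I : Set E}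
    (hspan : ∀ x ∈ I, ∃ f : ι → E, (∀ j, f j ∈ J j) ∧ x = ∑ j, f j) :
    I ⊆ sumExcept J k + J k := by
  intro x hx
  obtain ⟨f, hf, rfl⟩ := hspan x hx
  refine ⟨∑ j, Function.update f k 0 j, ⟨Function.update f k 0, fun j => ?_, by simp, rfl⟩,
    f k, hf k, ?_⟩
  · rcases eq_or_ne j k with rfl | hjk
    · simpa using (hJ j).isSub.zero_mem
    · simpa [hjk] using hf j
  · dsimp only
    rw [Finset.sum_update_of_mem (Finset.mem_univ k), zero_add, Finset.sdiff_singleton_eq_erase,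
      Finset.sum_erase_add _ _ (Finset.mem_univ k)]

theorem inter_sumExcept_subset (hJ : ∀ j, IsIdeal (J j))
    (huniq : ∀ f g : ι → E, (∀ j, f j ∈ J j) → (∀ j, g j ∈ J j) → ∑ j, f j = ∑ j, g j → f = g) :
    J k ∩ sumExcept J k ⊆ {0} := by
  rintro - ⟨hx, f, hf, hfk, rfl⟩
  have hsingle : ∀ j, (Pi.single k (∑ i, f i) : ι → E) j ∈ J j := fun j => by
    rcases eq_or_ne j k with rfl | hjk
    · simpa using hx
    · simpa [Pi.single_eq_of_ne hjk] using (hJ j).isSub.zero_mem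
  have h := congrFun (huniq f _ hf hsingle (Fintype.sum_pi_single' k _).symm) k
  rw [hfk, Pi.single_eq_same] at h
  exact h.symm

end AbelianType

end SkewBrace

/-- with `I = I₁ × ⋯ × I_r`, `r ≥ 2`, `E` splits over `I` iff for
some (equivalently any) pair `k ≠ m`, `E/I_k` splits over `I/I_k` and `E/I_m`
splits over `I/I_m`. -/
theorem stmt_17 {E : Type*} [SkewBrace E] (hcomm : ∀ a b : E, a + b = b + a)
    (r : ℕ) (hr : 2 ≤ r) (I : Set E) (Ij : Fin r → Set E)
    (hI : IsIdeal I) (hIj : ∀ j, IsIdeal (Ij j))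
    (hsub : ∀ j, Ij j ⊆ I)
    (hspan : ∀ x ∈ I, ∃ f : Fin r → E, (∀ j, f j ∈ Ij j) ∧ x = (List.ofFn f).sum)
    (huniq : ∀ f g : Fin r → E, (∀ j, f j ∈ Ij j) → (∀ j, g j ∈ Ij j) →
      (List.ofFn f).sum = (List.ofFn g).sum → f = g) :
    (SkewBrace.RelSplit I {0} ↔
      ∃ k m : Fin r, k ≠ m ∧
        SkewBrace.RelSplit I (Ij k) ∧ SkewBrace.RelSplit I (Ij m)) ∧
    (SkewBrace.RelSplit I {0} ↔
      ∀ k m : Fin r, k ≠ m →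
        SkewBrace.RelSplit I (Ij k) ∧ SkewBrace.RelSplit I (Ij m)) := by
  have : IsAbelianType E := ⟨hcomm⟩
  simp only [List.sum_ofFn] at hspan huniq
  have hdown (h : RelSplit I {0}) (j : Fin r) : RelSplit I (Ij j) :=
    relSplit_of_relSplit_zero hI.isSub (hIj j) (hsub j) h
  have hup {k m : Fin r} (hkm : k ≠ m) (hk : RelSplit I (Ij k)) (hm : RelSplit I (Ij m)) :
      RelSplit I {0} :=
    relSplit_zero_of_relSplit hI.isSub (isIdeal_sumExcept hIj k) (hsub k)
      (sumExcept_subset hI.isSub hsub) (fun _ => mem_sumExcept_of_mem hIj hkm.symm)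
      (subset_sumExcept_add hIj hspan) (inter_sumExcept_subset hIj huniq) hk hm
  have h01 : (⟨0, by omega⟩ : Fin r) ≠ ⟨1, by omega⟩ := by simp
  exact ⟨⟨fun h => ⟨_, _, h01, hdown h _, hdown h _⟩, fun ⟨_, _, hkm, hk, hm⟩ => hup hkm hk hm⟩,
    ⟨fun h _ _ _ => ⟨hdown h _, hdown h _⟩, fun h => hup h01 (h _ _ h01).1 (h _ _ h01).2⟩⟩
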